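/- For q ≥ 2 and z = 1/q, the lower tail bound ν(-1/2 + 1/q) ≥ ∑_{k=q}^{2q-1} k/(2^k - 1) ≥ 2^{-q}(2q+2) - 2^{-2q}(4q+2) holds, where ν(x) = ∑_{q'≥2} ∑_{p coprime to q'} (q'/(2^{q'}-1)) 1_{J_{p/q'}}(x). -/
import Mathlib


noncomputable def tpq (p q : ℕ) : ℝ :=
  ∑ i ∈ Finset.Icc 1 q,
    ((⌊(((i + 1) * p : ℕ) : ℝ) / q⌋ - ⌊((i * p : ℕ) : ℝ) / q⌋ : ℤ) : ℝ) / 2 ^ i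

noncomputable def Jpq (p q : ℕ) : Set ℝ :=
  Set.Icc (((p : ℝ) - tpq p q) / q - 1 / 2) (((p : ℝ) - tpq p q + 1) / q - 1 / 2)

noncomputable def nuTerm (q : ℕ) (x : ℝ) : ℝ :=
  ∑ p ∈ (Finset.Ioo 0 q).filter (fun p => Nat.Coprime p q),
    (q : ℝ) / (2 ^ q - 1) * (Jpq p q).indicator 1 x

noncomputable def nu (x : ℝ) : ℝ := ∑' q : ℕ, nuTerm q x

lemma aux_le_two_pow_pred (q : ℕ) : q ≤ 2 ^ (q - 1) := by
  induction q with
  | zero => simp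
  | succ n ih =>
    cases n with
    | zero => simp
    | succ m =>
      have h1 : (m + 1) - 1 = m := by omega
      have h2 : (m + 2) - 1 = m + 1 := by omega
      rw [h1] at ih
      rw [h2, pow_succ]
      omega

lemma aux_floor_zero (n k : ℕ) (hk : 0 < k) (h : n < k) : ⌊((n : ℕ) : ℝ) / (k : ℝ)⌋ = 0 := by
  rw [Int.floor_eq_zero_iff]
  constructor
  · positivity
  · rw [div_lt_one (by exact_mod_cast hk)]
    exact_mod_cast h

lemma aux_floor_one (n k : ℕ) (hk : 0 < k) (h1 : k ≤ n) (h2 : n < 2 * k) :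
    ⌊((n : ℕ) : ℝ) / (k : ℝ)⌋ = 1 := by
  have hk' : (0 : ℝ) < k := by exact_mod_cast hk
  rw [Int.floor_eq_iff]
  constructor
  · rw [le_div_iff₀ hk']
    have : (k : ℝ) ≤ n := by exact_mod_cast h1
    push_cast
    linarith
  · rw [div_lt_iff₀ hk']
    push_cast
    exact_mod_cast (by exact_mod_cast h2 : (n : ℝ) < 2 * k)

lemma aux_tpq_one (k : ℕ) (hk : 2 ≤ k) : tpq 1 k = 1 / 2 ^ (k - 1) := by
  have hk0 : 0 < k := by omega
  unfold tpq
  rw [Finset.sum_congr rfl (g := fun i => if i = k - 1 then (1 : ℝ) / 2 ^ i else 0) ?_]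
  · rw [Finset.sum_ite_eq' (Finset.Icc 1 k) (k - 1) (fun i => (1 : ℝ) / 2 ^ i)]
    rw [if_pos (by simp [Finset.mem_Icc]; omega)]
  · intro i hi
    simp only [Finset.mem_Icc] at hi
    simp only [mul_one]
    by_cases hik : i = k - 1
    · rw [if_pos hik]
      have hip1 : i + 1 = k := by omega
      rw [hip1, hik]
      rw [aux_floor_one k k hk0 le_rfl (by omega), aux_floor_zero (k - 1) k hk0 (by omega)]
      norm_num
    · rw [if_neg hik]
      rcases Nat.lt_or_ge i (k - 1) with hlt | hge
      · rw [aux_floor_zero (i + 1) k hk0 (by omega), aux_floor_zero i k hk0 (by omega)]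
        norm_num
      · -- i = k  (since i ≤ k, i ≥ k-1, i ≠ k-1)
        have hik' : i = k := by omega
        rw [hik']
        rw [aux_floor_one (k + 1) k hk0 (by omega) (by omega),
          aux_floor_one k k hk0 le_rfl (by omega)]
        norm_num

lemma aux_mem_J (q k : ℕ) (hq : 2 ≤ q) (hk1 : q ≤ k) (hk2 : k < 2 * q) :
    (-(1 / 2) + 1 / q : ℝ) ∈ Jpq 1 k := by
  have hk : 2 ≤ k := le_trans hq hk1
  have hq0 : (0 : ℝ) < q := by exact_mod_cast (by omega : 0 < q)
  have hk0 : (0 : ℝ) < k := by exact_mod_cast (by omega : 0 < k)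
  have hqk : (q : ℝ) ≤ k := by exact_mod_cast hk1
  have hpow : (0 : ℝ) < 2 ^ (k - 1) := by positivity
  have haq : (q : ℝ) / 2 ^ (k - 1) ≤ 1 := by
    rw [div_le_one hpow]
    have : q ≤ 2 ^ (k - 1) := le_trans (aux_le_two_pow_pred q |>.trans
      (Nat.pow_le_pow_right (by norm_num) (by omega))) le_rfl
    exact_mod_cast this
  have hk2' : (k : ℝ) + 1 ≤ 2 * q := by exact_mod_cast (by omega : k + 1 ≤ 2 * q)
  rw [Jpq, aux_tpq_one k hk, Set.mem_Icc]
  set a : ℝ := 1 / 2 ^ (k - 1) with ha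
  have ha0 : 0 < a := by positivity
  constructor
  · have h1 : ((1 : ℝ) - a) / k ≤ 1 / k := by
      gcongr <;> first | exact hk0.le | linarith
    have h2 : (1 : ℝ) / k ≤ 1 / q := one_div_le_one_div_of_le hq0 hqk
    push_cast
    linarith
  · have key : (1 : ℝ) / q ≤ (1 - a + 1) / k := by
      rw [div_le_div_iff₀ hq0 hk0]
      have haq' : a * q ≤ 1 := by
        rw [ha]
        calc 1 / 2 ^ (k - 1) * (q : ℝ) = (q : ℝ) / 2 ^ (k - 1) := by ring
        _ ≤ 1 := haq
      nlinarith
    push_cast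
    linarith

lemma aux_nuTerm_nonneg (k : ℕ) (x : ℝ) : 0 ≤ nuTerm k x := by
  apply Finset.sum_nonneg
  intro p _
  apply mul_nonneg
  · rcases Nat.eq_zero_or_pos k with h | h
    · simp [h]
    · apply div_nonneg (by positivity)
      have : (1 : ℝ) ≤ 2 ^ k := by exact_mod_cast Nat.one_le_two_pow
      linarith
  · exact Set.indicator_nonneg (fun _ _ => by norm_num) x

lemma aux_nuTerm_le (k : ℕ) (x : ℝ) :
    nuTerm k x ≤ 2 * (k : ℝ) ^ 2 * (1 / 2) ^ k := by
  rcases Nat.lt_or_ge k 2 with hk | hk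
  · have : (Finset.Ioo 0 k).filter (fun p => Nat.Coprime p k) = ∅ := by
      interval_cases k <;> decide
    rw [nuTerm, this, Finset.sum_empty]
    positivity
  · have hpow : (1 : ℝ) ≤ 2 ^ (k - 1) := by exact_mod_cast Nat.one_le_two_pow
    have h2k : (2 : ℝ) ^ (k - 1) ≤ 2 ^ k - 1 := by
      have : (2 : ℝ) ^ k = 2 * 2 ^ (k - 1) := by
        rw [← pow_succ']
        congr 1
        omega
      linarith
    have hpos : (0 : ℝ) < 2 ^ k - 1 := lt_of_lt_of_le (by linarith) h2k
    have hterm : ∀ p ∈ (Finset.Ioo 0 k).filter (fun p => Nat.Coprime p k),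
        (k : ℝ) / (2 ^ k - 1) * (Jpq p k).indicator 1 x ≤ (k : ℝ) / (2 ^ k - 1) := by
      intro p _
      have hind : (Jpq p k).indicator (1 : ℝ → ℝ) x ≤ 1 := by
        classical
        rw [Set.indicator]
        split <;> norm_num
      calc (k : ℝ) / (2 ^ k - 1) * (Jpq p k).indicator 1 x
          ≤ (k : ℝ) / (2 ^ k - 1) * 1 := by
            have hc : (0:ℝ) ≤ (k : ℝ) / (2 ^ k - 1) := by positivity
            nlinarith
        _ = (k : ℝ) / (2 ^ k - 1) := mul_one _
    calc nuTerm k x ≤ ∑ _p ∈ (Finset.Ioo 0 k).filter (fun p => Nat.Coprime p k),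
          (k : ℝ) / (2 ^ k - 1) := Finset.sum_le_sum hterm
      _ = ((Finset.Ioo 0 k).filter (fun p => Nat.Coprime p k)).card * ((k : ℝ) / (2 ^ k - 1)) := by
          rw [Finset.sum_const, nsmul_eq_mul]
      _ ≤ (k : ℝ) * ((k : ℝ) / (2 ^ k - 1)) := by
          have hc : (0:ℝ) ≤ (k : ℝ) / (2 ^ k - 1) := by positivity
          have h1 : ((Finset.Ioo 0 k).filter (fun p => Nat.Coprime p k)).card ≤ k := by
            calc ((Finset.Ioo 0 k).filter (fun p => Nat.Coprime p k)).card
                ≤ (Finset.Ioo 0 k).card := Finset.card_filter_le _ _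
              _ ≤ k := by rw [Nat.card_Ioo]; omega
          have h1' : (((Finset.Ioo 0 k).filter (fun p => Nat.Coprime p k)).card : ℝ) ≤ k := by
            exact_mod_cast h1
          nlinarith
      _ ≤ (k : ℝ) * ((k : ℝ) / 2 ^ (k - 1)) := by
          have hd : (k : ℝ) / (2 ^ k - 1) ≤ (k : ℝ) / 2 ^ (k - 1) :=
            div_le_div_of_nonneg_left (by positivity) (by linarith) h2k
          have hk0 : (0:ℝ) ≤ k := by positivity
          nlinarith
      _ = 2 * (k : ℝ) ^ 2 * (1 / 2) ^ k := by
          have : (2 : ℝ) ^ k = 2 * 2 ^ (k - 1) := by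
            rw [← pow_succ']
            congr 1
            omega
          rw [div_pow, one_pow, this]
          field_simp

lemma aux_summable (x : ℝ) : Summable (fun k => nuTerm k x) := by
  apply Summable.of_nonneg_of_le (fun k => aux_nuTerm_nonneg k x) (fun k => aux_nuTerm_le k x)
  have h := summable_pow_mul_geometric_of_norm_lt_one (R := ℝ) 2
    (r := 1 / 2) (by rw [Real.norm_eq_abs, abs_of_nonneg] <;> norm_num)
  have := h.mul_left 2
  apply this.congr
  intro k
  push_cast
  ring

lemma aux_geo_sum (a : ℕ) : ∀ b, a ≤ b →
    ∑ k ∈ Finset.Ico a b, (k : ℝ) / 2 ^ k = (2 * a + 2) / 2 ^ a - (2 * b + 2) / 2 ^ b := by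
  intro b hb
  induction b, hb using Nat.le_induction with
  | base => simp
  | succ b hb ih =>
    rw [Finset.sum_Ico_succ_top hb, ih]
    have h2 : (2 : ℝ) ^ b ≠ 0 := by positivity
    push_cast
    rw [pow_succ]
    field_simp
    ring

theorem stmt_19 (q : ℕ) (hq : 2 ≤ q) :
    (∑ k ∈ Finset.Ico q (2 * q), (k : ℝ) / (2 ^ k - 1) ≤ nu (-(1 / 2) + 1 / q)) ∧
    ((2 * q + 2) / 2 ^ q - (4 * q + 2) / 2 ^ (2 * q)
      ≤ ∑ k ∈ Finset.Ico q (2 * q), (k : ℝ) / (2 ^ k - 1)) := by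
  have hpos : ∀ k ∈ Finset.Ico q (2 * q), (0 : ℝ) < 2 ^ k - 1 := by
    intro k hk
    simp only [Finset.mem_Ico] at hk
    have : (2 : ℝ) ^ 1 ≤ 2 ^ k := pow_le_pow_right₀ (by norm_num) (by omega)
    simp at this
    linarith
  constructor
  · set x : ℝ := -(1 / 2) + 1 / q with hx
    have hterm : ∀ k ∈ Finset.Ico q (2 * q), (k : ℝ) / (2 ^ k - 1) ≤ nuTerm k x := by
      intro k hk
      have hkpos := hpos k hk
      simp only [Finset.mem_Ico] at hk
      have hk2 : 2 ≤ k := le_trans hq hk.1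
      have h1mem : 1 ∈ (Finset.Ioo 0 k).filter (fun p => Nat.Coprime p k) := by
        simp [Finset.mem_filter, Finset.mem_Ioo, Nat.coprime_one_left]
        omega
      have hval : (k : ℝ) / (2 ^ k - 1) * (Jpq 1 k).indicator 1 x = (k : ℝ) / (2 ^ k - 1) := by
        rw [Set.indicator_of_mem (aux_mem_J q k hq hk.1 hk.2)]
        simp
      calc (k : ℝ) / (2 ^ k - 1) = (k : ℝ) / (2 ^ k - 1) * (Jpq 1 k).indicator 1 x := hval.symm
        _ ≤ nuTerm k x := by
            unfold nuTerm
            exact Finset.single_le_sum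
              (f := fun p => (k : ℝ) / (2 ^ k - 1) * (Jpq p k).indicator 1 x)
              (fun p _ => mul_nonneg (by positivity)
                (Set.indicator_nonneg (fun _ _ => by norm_num) x)) h1mem
    calc ∑ k ∈ Finset.Ico q (2 * q), (k : ℝ) / (2 ^ k - 1)
        ≤ ∑ k ∈ Finset.Ico q (2 * q), nuTerm k x := Finset.sum_le_sum hterm
      _ ≤ nu x := Summable.sum_le_tsum _ (fun k _ => aux_nuTerm_nonneg k x) (aux_summable x)
  · have hgeo := aux_geo_sum q (2 * q) (by omega)
    have hterm : ∀ k ∈ Finset.Ico q (2 * q), (k : ℝ) / 2 ^ k ≤ (k : ℝ) / (2 ^ k - 1) := by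
      intro k hk
      apply div_le_div_of_nonneg_left (by positivity) (hpos k hk) (by linarith)
    calc (2 * (q : ℝ) + 2) / 2 ^ q - (4 * q + 2) / 2 ^ (2 * q)
        = (2 * (q : ℝ) + 2) / 2 ^ q - (2 * ((2 * q : ℕ) : ℝ) + 2) / 2 ^ (2 * q) := by
          push_cast
          ring_nf
      _ = ∑ k ∈ Finset.Ico q (2 * q), (k : ℝ) / 2 ^ k := hgeo.symm
      _ ≤ ∑ k ∈ Finset.Ico q (2 * q), (k : ℝ) / (2 ^ k - 1) := Finset.sum_le_sum hterm
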